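/- arXiv:2510.00961 — 7 statements merged into one kernel-verified Lean document; each statement's English description precedes it below -/
import Mathlib

section
/- Let X be a finite-dimensional real normed vector space, let N ≥ 1 be an integer, let α ∈ (0,1), let K ≥ 1, and let c, C, p be positive real numbers. Then there exist M > 0 and λ ∈ (0,1) with the following property: for every function V : X → ℝ satisfying c·‖x‖^p ≤ V(x) ≤ C·‖x‖^p for all x ∈ X, every sequence x : ℕ → X, and every strictly increasing sequence τ : ℕ → ℕ such that τ_0 = 0, τ_{κ+1} − τ_κ ≤ N for all κ, V(x(τ_{κ+1})) ≤ (1−α)·V(x(τ_κ)) for all κ, and V(x(t)) ≤ K·V(x(τ_κ)) for all κ and all t with τ_κ ≤ t < τ_{κ+1}, it holds that ‖x(t)‖ ≤ M·λ^t·‖x(0)‖ for every t ∈ ℕ. -/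
/-!
Along the sampling times `V` contracts geometrically, so `V (x (τ κ)) ≤ (1 - α) ^ κ V (x 0)`,
and in between it exceeds this by at most the factor `K`. The sandwich `c ‖z‖ ^ p ≤ V z ≤ C ‖z‖ ^ p`
turns this into `‖x t‖ ≤ (K C / c) ^ (1 / p) ρ ^ κ ‖x 0‖` with `ρ = (1 - α) ^ (1 / p)`.
Since the gaps are at most `N`, the sampling interval containing `t` has index `κ > t / N - 1`,
so `ρ ^ κ ≤ ρ⁻¹ (ρ ^ (1 / N)) ^ t`.
-/

open Real

theorem StrictMono.exists_le_lt_succ {τ : ℕ → ℕ} (hτ : StrictMono τ) (h0 : τ 0 = 0) (t : ℕ) :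
    ∃ κ, τ κ ≤ t ∧ t < τ (κ + 1) := by
  induction t with
  | zero => exact ⟨0, h0.le, h0.ge.trans_lt (hτ zero_lt_one)⟩
  | succ t ih =>
    obtain ⟨κ, hκt, htκ⟩ := ih
    rcases (Nat.succ_le_of_lt htκ).lt_or_eq with hlt | heq
    · exact ⟨κ, by omega, hlt⟩
    · exact ⟨κ + 1, heq.ge, heq.trans_lt (hτ (Nat.lt_succ_self _))⟩

theorem Monotone.le_mul_of_sub_le {τ : ℕ → ℕ} (hτ : Monotone τ) (h0 : τ 0 = 0) {N : ℕ}
    (hgap : ∀ κ, τ (κ + 1) - τ κ ≤ N) (κ : ℕ) : τ κ ≤ κ * N := by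
  induction κ with
  | zero => simp [h0]
  | succ κ ih =>
    have := hτ (Nat.le_succ κ)
    have := hgap κ
    rw [Nat.succ_mul]
    omega

theorem le_mul_pow_of_sampled {v : ℕ → ℝ} {τ : ℕ → ℕ} {r K : ℝ} (hr : 0 ≤ r) (hK : 0 ≤ K)
    (h0 : τ 0 = 0) (hdec : ∀ κ, v (τ (κ + 1)) ≤ r * v (τ κ))
    (hgrow : ∀ κ t, τ κ ≤ t → t < τ (κ + 1) → v t ≤ K * v (τ κ))
    {κ t : ℕ} (hκt : τ κ ≤ t) (htκ : t < τ (κ + 1)) :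
    v t ≤ K * r ^ κ * v 0 := by
  have hsample : v (τ κ) ≤ r ^ κ * v (τ 0) := le_geom (u := v ∘ τ) hr κ fun k _ ↦ hdec k
  rw [h0] at hsample
  calc v t ≤ K * v (τ κ) := hgrow κ t hκt htκ
    _ ≤ K * (r ^ κ * v 0) := by gcongr
    _ = K * r ^ κ * v 0 := by ring

theorem norm_le_of_lyapunov_le {E : Type*} [SeminormedAddCommGroup E] {V : E → ℝ} {c C p B : ℝ}
    (hc : 0 < c) (hC : 0 ≤ C) (hp : 0 < p) (hB : 0 ≤ B)
    (hVl : ∀ z, c * ‖z‖ ^ p ≤ V z) (hVu : ∀ z, V z ≤ C * ‖z‖ ^ p) {y z : E}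
    (h : V y ≤ B * V z) :
    ‖y‖ ≤ B ^ p⁻¹ * (C / c) ^ p⁻¹ * ‖z‖ := by
  have hpow : ‖y‖ ^ p ≤ B * (C / c) * ‖z‖ ^ p := by
    refine le_of_mul_le_mul_left ?_ hc
    calc c * ‖y‖ ^ p ≤ V y := hVl y
      _ ≤ B * V z := h
      _ ≤ B * (C * ‖z‖ ^ p) := by gcongr; exact hVu z
      _ = c * (B * (C / c) * ‖z‖ ^ p) := by field_simp
  calc ‖y‖ ≤ (B * (C / c) * ‖z‖ ^ p) ^ p⁻¹ :=
        (le_rpow_inv_iff_of_pos (norm_nonneg y) (by positivity) hp).2 hpow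
    _ = B ^ p⁻¹ * (C / c) ^ p⁻¹ * ‖z‖ := by
        rw [mul_rpow (by positivity) (by positivity), mul_rpow hB (by positivity),
          rpow_rpow_inv (norm_nonneg z) hp.ne']

theorem pow_le_inv_mul_rpow_pow {ρ : ℝ} (h0 : 0 < ρ) (h1 : ρ ≤ 1) {N κ t : ℕ} (hN : 0 < N)
    (ht : t < (κ + 1) * N) :
    ρ ^ κ ≤ ρ⁻¹ * (ρ ^ (N : ℝ)⁻¹) ^ t := by
  have hexp : (t : ℝ) * (N : ℝ)⁻¹ ≤ κ + 1 := by
    rw [← div_eq_mul_inv, div_le_iff₀ (by exact_mod_cast hN)]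
    exact_mod_cast ht.le
  calc ρ ^ κ = ρ⁻¹ * ρ ^ ((κ + 1 : ℕ) : ℝ) := by
        rw [rpow_natCast, pow_succ', inv_mul_cancel_left₀ h0.ne']
    _ ≤ ρ⁻¹ * ρ ^ ((t : ℝ) * (N : ℝ)⁻¹) := by
        refine mul_le_mul_of_nonneg_left ?_ (inv_nonneg.2 h0.le)
        exact rpow_le_rpow_of_exponent_ge h0 h1 (by push_cast; exact hexp)
    _ = ρ⁻¹ * (ρ ^ (N : ℝ)⁻¹) ^ t := by
        rw [← rpow_natCast, ← rpow_mul h0.le, mul_comm ((N : ℝ)⁻¹)]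

theorem stmt_2_general (X : Type*) [NormedAddCommGroup X]
    (N : ℕ) (hN : 1 ≤ N) (α : ℝ) (hα0 : 0 < α) (hα1 : α < 1)
    (K : ℝ) (hK : 1 ≤ K) (c C p : ℝ) (hc : 0 < c) (hC : 0 < C) (hp : 0 < p) :
    ∃ M > 0, ∃ lam ∈ Set.Ioo (0 : ℝ) 1,
      ∀ (V : X → ℝ) (x : ℕ → X) (τ : ℕ → ℕ),
        (∀ z : X, c * ‖z‖ ^ p ≤ V z) →
        (∀ z : X, V z ≤ C * ‖z‖ ^ p) →
        StrictMono τ →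
        τ 0 = 0 →
        (∀ κ : ℕ, τ (κ + 1) - τ κ ≤ N) →
        (∀ κ : ℕ, V (x (τ (κ + 1))) ≤ (1 - α) * V (x (τ κ))) →
        (∀ κ t : ℕ, τ κ ≤ t → t < τ (κ + 1) → V (x t) ≤ K * V (x (τ κ))) →
        ∀ t : ℕ, ‖x t‖ ≤ M * lam ^ t * ‖x 0‖ := by
  have hr0 : 0 < 1 - α := by linarith
  set ρ := (1 - α) ^ p⁻¹
  have hρ0 : 0 < ρ := by positivity
  have hρ1 : ρ < 1 := rpow_lt_one hr0.le (by linarith) (by positivity)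
  refine ⟨K ^ p⁻¹ * (C / c) ^ p⁻¹ * ρ⁻¹, by positivity, ρ ^ (N : ℝ)⁻¹,
    ⟨by positivity, rpow_lt_one hρ0.le hρ1 (by positivity)⟩, ?_⟩
  intro V x τ hVl hVu hτ hτ0 hgap hdec hgrow t
  obtain ⟨κ, hκt, htκ⟩ := hτ.exists_le_lt_succ hτ0 t
  have hV : V (x t) ≤ K * (1 - α) ^ κ * V (x 0) :=
    le_mul_pow_of_sampled (v := V ∘ x) hr0.le (by linarith) hτ0 hdec hgrow hκt htκ
  have ht : t < (κ + 1) * N := htκ.trans_le (hτ.monotone.le_mul_of_sub_le hτ0 hgap (κ + 1))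
  calc ‖x t‖ ≤ (K * (1 - α) ^ κ) ^ p⁻¹ * (C / c) ^ p⁻¹ * ‖x 0‖ :=
        norm_le_of_lyapunov_le hc hC.le hp (by positivity) hVl hVu hV
    _ = K ^ p⁻¹ * (C / c) ^ p⁻¹ * ρ ^ κ * ‖x 0‖ := by
        rw [mul_rpow (by linarith) (by positivity), ← rpow_pow_comm hr0.le]
        ring
    _ ≤ K ^ p⁻¹ * (C / c) ^ p⁻¹ * (ρ⁻¹ * (ρ ^ (N : ℝ)⁻¹) ^ t) * ‖x 0‖ := by
        gcongr
        exact pow_le_inv_mul_rpow_pow hρ0 hρ1.le hN ht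
    _ = K ^ p⁻¹ * (C / c) ^ p⁻¹ * ρ⁻¹ * (ρ ^ (N : ℝ)⁻¹) ^ t * ‖x 0‖ := by ring

/-- Non-monotonic Lyapunov argument: if V is sandwiched between
c‖x‖^p and C‖x‖^p, decays by the factor (1-α) along sampling times τ_κ with gaps
at most N, and grows by at most the factor K ≥ 1 in between, then the state norm
decays exponentially, with constants M, λ depending only on the data N, α, K, c, C, p. -/
theorem stmt_2 (X : Type*) [NormedAddCommGroup X] [NormedSpace ℝ X]
    [FiniteDimensional ℝ X]
    (N : ℕ) (hN : 1 ≤ N) (α : ℝ) (hα0 : 0 < α) (hα1 : α < 1)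
    (K : ℝ) (hK : 1 ≤ K) (c C p : ℝ) (hc : 0 < c) (hC : 0 < C) (hp : 0 < p) :
    ∃ M > 0, ∃ lam ∈ Set.Ioo (0 : ℝ) 1,
      ∀ (V : X → ℝ) (x : ℕ → X) (τ : ℕ → ℕ),
        (∀ z : X, c * ‖z‖ ^ p ≤ V z) →
        (∀ z : X, V z ≤ C * ‖z‖ ^ p) →
        StrictMono τ →
        τ 0 = 0 →
        (∀ κ : ℕ, τ (κ + 1) - τ κ ≤ N) →
        (∀ κ : ℕ, V (x (τ (κ + 1))) ≤ (1 - α) * V (x (τ κ))) →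
        (∀ κ t : ℕ, τ κ ≤ t → t < τ (κ + 1) → V (x t) ≤ K * V (x (τ κ))) →
        ∀ t : ℕ, ‖x t‖ ≤ M * lam ^ t * ‖x 0‖ :=
  stmt_2_general X N hN α hα0 hα1 K hK c C p hc hC hp
end

section
/- Let X be a finite-dimensional real normed vector space, let N ≥ 1 be an integer, let σ_1, …, σ_N be positive real numbers with σ_1 + ⋯ + σ_N ≥ 1, let α ∈ (0,1), and let c, C, p be positive real numbers. Then there exist M > 0 and λ ∈ (0,1) with the following property: for every function V : X → ℝ satisfying c·‖x‖^p ≤ V(x) ≤ C·‖x‖^p for all x ∈ X, every sequence x : ℕ → X, and every strictly increasing sequence τ : ℕ → ℕ with τ_0 = 0 and 1 ≤ τ_{κ+1} − τ_κ ≤ N for all κ, such that (i) V(x(τ_{κ+1})) ≤ (1−α)·V(x(τ_κ)) for all κ, and (ii) for every κ there exists a finite sequence y_0, y_1, …, y_N in X with y_k = x(τ_κ + k) for all 0 ≤ k ≤ τ_{κ+1} − τ_κ and Σ_{k=1}^N σ_k·V(y_k) ≤ (1−α)·V(y_0), it holds that ‖x(t)‖ ≤ M·λ^t·‖x(0)‖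 for every t ∈ ℕ. -/
/-!
Write `r = 1 - α`. Along the sampling times the Lyapunov function decays geometrically,
`V (x (τ κ)) ≤ r ^ κ V (x 0)`. Between two sampling times the trajectory follows a predicted
sequence, and since every weight is at least `m = min σ_k > 0`, a single term of the average
descent condition already gives `V (x (τ κ + k)) ≤ (r / m) V (x (τ κ))`. As the gaps are at
most `N`, a time `t < τ (κ + 1)` has `t ≤ (κ + 1) N`, so `r ^ κ` is bounded by a multiple of
`(r ^ (1 / N)) ^ t`. The sandwich bounds on `V` turn this into exponential decay of `‖x t‖ ^ p`,
and taking `p`-th roots gives the rate `λ = r ^ (1 / (N p))`.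
-/

open Finset

namespace FlexibleStepMPC

theorem exists_le_lt_succ {τ : ℕ → ℕ} (hτ : StrictMono τ) (hτ0 : τ 0 = 0) (t : ℕ) :
    ∃ κ, τ κ ≤ t ∧ t < τ (κ + 1) := by
  induction t with
  | zero => exact ⟨0, hτ0.le, (Nat.zero_le _).trans_lt (hτ zero_lt_one)⟩
  | succ t ih =>
    obtain ⟨κ, hle, hlt⟩ := ih
    rcases (Nat.succ_le_of_lt hlt).eq_or_lt with heq | hlt'
    · exact ⟨κ + 1, heq.ge, heq.trans_lt (hτ (Nat.lt_succ_self _))⟩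
    · exact ⟨κ, by omega, hlt'⟩

theorem le_mul_of_forall_sub_le {τ : ℕ → ℕ} {N : ℕ} (hτ0 : τ 0 = 0)
    (hgap : ∀ κ, τ (κ + 1) - τ κ ≤ N) (κ : ℕ) : τ κ ≤ κ * N := by
  induction κ with
  | zero => simp [hτ0]
  | succ κ ih => have := hgap κ; rw [Nat.succ_mul]; omega

theorem le_div_of_sum_mul_le {ι : Type*} {s : Finset ι} {σ f : ι → ℝ} {m b : ℝ} (hm : 0 < m)
    (hσ : ∀ i ∈ s, m ≤ σ i) (hf : ∀ i ∈ s, 0 ≤ f i) (hsum : ∑ i ∈ s, σ i * f i ≤ b)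
    {i : ι} (hi : i ∈ s) : f i ≤ b / m := by
  rw [le_div_iff₀' hm]
  calc m * f i ≤ σ i * f i := mul_le_mul_of_nonneg_right (hσ i hi) (hf i hi)
    _ ≤ ∑ j ∈ s, σ j * f j :=
      single_le_sum (fun j hj => mul_nonneg (hm.le.trans (hσ j hj)) (hf j hj)) hi
    _ ≤ b := hsum

theorem pow_succ_le_rpow_pow {r : ℝ} (hr0 : 0 < r) (hr1 : r ≤ 1) {N : ℕ} (hN : 0 < N)
    {p : ℝ} (hp : 0 < p) {κ t : ℕ} (ht : t ≤ (κ + 1) * N) :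
    r ^ (κ + 1) ≤ ((r ^ (1 / (N * p))) ^ t) ^ p := by
  have hN' : (0 : ℝ) < N := by exact_mod_cast hN
  have htN : (t : ℝ) / N ≤ (κ + 1 : ℕ) := by
    rw [div_le_iff₀ hN']; exact_mod_cast ht
  rw [← Real.rpow_natCast r, ← Real.rpow_natCast (r ^ _), ← Real.rpow_mul hr0.le,
    ← Real.rpow_mul hr0.le]
  refine Real.rpow_le_rpow_of_exponent_ge hr0 hr1 (le_of_eq_of_le ?_ htN)
  field_simp

theorem le_rpow_inv_mul_of_rpow_le {a b K p : ℝ} (ha : 0 ≤ a) (hb : 0 ≤ b) (hK : 0 ≤ K)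
    (hp : 0 < p) (h : a ^ p ≤ K * b ^ p) : a ≤ K ^ (1 / p) * b := by
  have hKb : 0 ≤ K ^ (1 / p) * b := by positivity
  rwa [← Real.rpow_le_rpow_iff ha hKb hp, Real.mul_rpow (by positivity) hb,
    ← Real.rpow_mul hK, one_div_mul_cancel hp.ne', Real.rpow_one]

theorem le_max_mul_of_sum_mul_le {X : Type*} {V : X → ℝ} (hV : ∀ z, 0 ≤ V z) {N : ℕ}
    {σ : ℕ → ℝ} {m r : ℝ} (hm : 0 < m) (hσ : ∀ k ∈ Icc 1 N, m ≤ σ k) {y : ℕ → X}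
    (hy : ∑ k ∈ Icc 1 N, σ k * V (y k) ≤ r * V (y 0)) {k : ℕ} (hk : k ≤ N) :
    V (y k) ≤ max 1 (r / m) * V (y 0) := by
  rcases k.eq_zero_or_pos with rfl | hk0
  · exact le_mul_of_one_le_left (hV _) (le_max_left _ _)
  · calc V (y k) ≤ r * V (y 0) / m :=
          le_div_of_sum_mul_le hm hσ (fun j _ => hV _) hy (mem_Icc.2 ⟨hk0, hk⟩)
      _ = r / m * V (y 0) := by ring
      _ ≤ max 1 (r / m) * V (y 0) := mul_le_mul_of_nonneg_right (le_max_right _ _) (hV _)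

end FlexibleStepMPC

open FlexibleStepMPC in
theorem stmt_3_general (X : Type*) [NormedAddCommGroup X]
    (N : ℕ) (hN : 1 ≤ N) (σ : ℕ → ℝ)
    (hσpos : ∀ k ∈ Finset.Icc 1 N, 0 < σ k)
    (α : ℝ) (hα0 : 0 < α) (hα1 : α < 1)
    (c C p : ℝ) (hc : 0 < c) (hC : 0 < C) (hp : 0 < p) :
    ∃ M > 0, ∃ lam ∈ Set.Ioo (0 : ℝ) 1,
      ∀ (V : X → ℝ) (x : ℕ → X) (τ : ℕ → ℕ),
        (∀ z : X, c * ‖z‖ ^ p ≤ V z) →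
        (∀ z : X, V z ≤ C * ‖z‖ ^ p) →
        StrictMono τ →
        τ 0 = 0 →
        (∀ κ : ℕ, 1 ≤ τ (κ + 1) - τ κ) →
        (∀ κ : ℕ, τ (κ + 1) - τ κ ≤ N) →
        (∀ κ : ℕ, V (x (τ (κ + 1))) ≤ (1 - α) * V (x (τ κ))) →
        (∀ κ : ℕ, ∃ y : ℕ → X,
            (∀ k ≤ τ (κ + 1) - τ κ, y k = x (τ κ + k)) ∧
            ∑ k ∈ Finset.Icc 1 N, σ k * V (y k) ≤ (1 - α) * V (y 0)) →
        ∀ t : ℕ, ‖x t‖ ≤ M * lam ^ t * ‖x 0‖ := by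
  have h1α : 0 < 1 - α := by linarith
  obtain ⟨m, hm, hσm⟩ : ∃ m > 0, ∀ k ∈ Icc 1 N, m ≤ σ k :=
    ⟨_, (lt_inf'_iff (nonempty_Icc.2 hN)).2 hσpos, fun k hk => inf'_le σ hk⟩
  set B := max 1 ((1 - α) / m)
  have hB : 0 < B := lt_max_of_lt_left one_pos
  refine ⟨(C * B / (c * (1 - α))) ^ (1 / p), by positivity, (1 - α) ^ (1 / (N * p)),
    ⟨by positivity, Real.rpow_lt_one h1α.le (by linarith) (by positivity)⟩, ?_⟩
  intro V x τ hVl hVu hτ hτ0 _ hgap hdec hpred t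
  have hV : ∀ z, 0 ≤ V z := fun z => (by positivity : 0 ≤ c * ‖z‖ ^ p).trans (hVl z)
  obtain ⟨κ, hle, hlt⟩ := exists_le_lt_succ hτ hτ0 t
  have hVt : V (x t) ≤ B * V (x (τ κ)) := by
    obtain ⟨y, hyx, hy⟩ := hpred κ
    have hgapκ := hgap κ
    have := le_max_mul_of_sum_mul_le hV hm hσm hy (k := t - τ κ) (by omega)
    rwa [hyx _ (by omega), hyx 0 (Nat.zero_le _), add_zero, Nat.add_sub_cancel' hle] at this
  have hVκ : V (x (τ κ)) ≤ (1 - α) ^ κ * V (x 0) := by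
    simpa only [hτ0] using le_geom (u := fun κ => V (x (τ κ))) h1α.le κ fun k _ => hdec k
  have hrate := pow_succ_le_rpow_pow h1α (by linarith) hN hp
    (hlt.le.trans (le_mul_of_forall_sub_le hτ0 hgap (κ + 1)))
  rw [mul_assoc]
  refine le_rpow_inv_mul_of_rpow_le (norm_nonneg (x t)) (by positivity) (by positivity) hp ?_
  rw [div_mul_eq_mul_div, le_div_iff₀' (by positivity)]
  calc c * (1 - α) * ‖x t‖ ^ p ≤ (1 - α) * V (x t) := by
        rw [mul_comm c, mul_assoc]; exact mul_le_mul_of_nonneg_left (hVl _) h1α.le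
    _ ≤ (1 - α) * (B * ((1 - α) ^ κ * V (x 0))) :=
        mul_le_mul_of_nonneg_left (hVt.trans (mul_le_mul_of_nonneg_left hVκ hB.le)) h1α.le
    _ = B * ((1 - α) ^ (κ + 1) * V (x 0)) := by ring
    _ ≤ B * ((((1 - α) ^ (1 / (N * p))) ^ t) ^ p * (C * ‖x 0‖ ^ p)) :=
        mul_le_mul_of_nonneg_left (mul_le_mul hrate (hVu _) (hV _) (by positivity)) hB.le
    _ = C * B * (((1 - α) ^ (1 / (N * p))) ^ t * ‖x 0‖) ^ p := by
        rw [Real.mul_rpow (by positivity) (norm_nonneg _)]; ring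

/-- Trajectory-level content of Theorem 1 (flexible-step MPC for known
LTI systems).  If V is sandwiched between c‖x‖^p and C‖x‖^p, decays by the factor
(1-α) along sampling times τ_κ with gaps between 1 and N, and at each sampling time
the trajectory coincides with an initial segment of a predicted sequence
y₀,…,y_N satisfying the average descent condition ∑_{k=1}^N σ_k V(y_k) ≤ (1-α)V(y₀),
then the state norm decays exponentially with uniform constants M, λ. -/
theorem stmt_3 (X : Type*) [NormedAddCommGroup X] [NormedSpace ℝ X]
    [FiniteDimensional ℝ X]
    (N : ℕ) (hN : 1 ≤ N) (σ : ℕ → ℝ)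
    (hσpos : ∀ k ∈ Finset.Icc 1 N, 0 < σ k)
    (hσsum : 1 ≤ ∑ k ∈ Finset.Icc 1 N, σ k)
    (α : ℝ) (hα0 : 0 < α) (hα1 : α < 1)
    (c C p : ℝ) (hc : 0 < c) (hC : 0 < C) (hp : 0 < p) :
    ∃ M > 0, ∃ lam ∈ Set.Ioo (0 : ℝ) 1,
      ∀ (V : X → ℝ) (x : ℕ → X) (τ : ℕ → ℕ),
        (∀ z : X, c * ‖z‖ ^ p ≤ V z) →
        (∀ z : X, V z ≤ C * ‖z‖ ^ p) →
        StrictMono τ →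
        τ 0 = 0 →
        (∀ κ : ℕ, 1 ≤ τ (κ + 1) - τ κ) →
        (∀ κ : ℕ, τ (κ + 1) - τ κ ≤ N) →
        (∀ κ : ℕ, V (x (τ (κ + 1))) ≤ (1 - α) * V (x (τ κ))) →
        (∀ κ : ℕ, ∃ y : ℕ → X,
            (∀ k ≤ τ (κ + 1) - τ κ, y k = x (τ κ + k)) ∧
            ∑ k ∈ Finset.Icc 1 N, σ k * V (y k) ≤ (1 - α) * V (y 0)) →
        ∀ t : ℕ, ‖x t‖ ≤ M * lam ^ t * ‖x 0‖ :=
  stmt_3_general X N hN σ hσpos α hα0 hα1 c C p hc hC hp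
end

section
/- Let X and U be finite-dimensional real normed vector spaces and let A : X → X and B : U → X be linear maps. Suppose there exist a linear map F : X → U and constants M ≥ 1, ρ ∈ (0,1) such that ‖(A + B∘F)^t z‖ ≤ M·ρ^t·‖z‖ for all t ∈ ℕ and all z ∈ X. Then there exist an integer N ≥ 1, a real number α ∈ (0,1), and positive real numbers σ_1, …, σ_N with σ_1 + ⋯ + σ_N ≥ 1 such that for every x̄ ∈ X there exist an input sequence ν_0, …, ν_{N−1} in U and states x_0, x_1, …, x_N in X with x_0 = x̄, x_{k+1} = A x_k + B ν_k for all 0 ≤ k < N, and Σ_{k=1}^N σ_k·‖x_k‖ ≤ (1−α)·‖x̄‖. -/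
/-!
Close the loop with the stabilizing feedback: the predicted trajectory `x k = (A + B F)^k x̄`
with inputs `ν k = F (x k)` obeys `‖x k‖ ≤ M ρ^k ‖x̄‖`, so `∑_{k=1}^N ‖x k‖ ≤ M ρ/(1-ρ) ‖x̄‖`
whatever the horizon. With the uniform weights `σ k = 1/N` (summing to exactly `1`), the
weighted sum is at most `M ρ/((1-ρ) N) ‖x̄‖`, which is `≤ ‖x̄‖/2` once `N ≥ 2 M ρ/(1-ρ)`;
hence `α = 1/2` works.
-/

open Finset

theorem LinearMap.add_comp_pow_succ_apply {R M N : Type*} [CommRing R]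
    [AddCommGroup M] [Module R M] [AddCommGroup N] [Module R N]
    (A : M →ₗ[R] M) (B : N →ₗ[R] M) (F : M →ₗ[R] N) (k : ℕ) (x : M) :
    ((A + B ∘ₗ F) ^ (k + 1)) x =
      A (((A + B ∘ₗ F) ^ k) x) + B (F (((A + B ∘ₗ F) ^ k) x)) := by
  rw [pow_succ', Module.End.mul_apply, LinearMap.add_apply, LinearMap.comp_apply]

theorem sum_Icc_one_le_of_le_geometric {a : ℕ → ℝ} {M ρ c : ℝ} (hM : 0 ≤ M) (hc : 0 ≤ c)
    (hρ0 : 0 ≤ ρ) (hρ1 : ρ < 1) (ha : ∀ k, a k ≤ M * ρ ^ k * c) (N : ℕ) :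
    ∑ k ∈ Icc 1 N, a k ≤ M * (ρ / (1 - ρ)) * c := by
  have hgeom : ∑ k ∈ Icc 1 N, ρ ^ k ≤ ρ / (1 - ρ) := by
    simpa [Finset.Ico_add_one_right_eq_Icc] using
      geom_sum_Ico_le_of_lt_one (m := 1) (n := N + 1) hρ0 hρ1
  calc ∑ k ∈ Icc 1 N, a k ≤ ∑ k ∈ Icc 1 N, M * ρ ^ k * c := sum_le_sum fun k _ => ha k
    _ = M * (∑ k ∈ Icc 1 N, ρ ^ k) * c := by rw [mul_sum, sum_mul]
    _ ≤ M * (ρ / (1 - ρ)) * c := by gcongr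

theorem sum_Icc_one_const_inv {N : ℕ} (hN : N ≠ 0) : ∑ _k ∈ Icc 1 N, (N : ℝ)⁻¹ = 1 := by
  simp [hN]

theorem stmt_4_general (X U : Type*)
    [NormedAddCommGroup X] [NormedSpace ℝ X]
    [NormedAddCommGroup U] [NormedSpace ℝ U]
    (A : X →ₗ[ℝ] X) (B : U →ₗ[ℝ] X)
    (F : X →ₗ[ℝ] U) (M ρ : ℝ) (hM : 1 ≤ M) (hρ0 : 0 < ρ) (hρ1 : ρ < 1)
    (hstab : ∀ (t : ℕ) (z : X), ‖((A + B ∘ₗ F) ^ t) z‖ ≤ M * ρ ^ t * ‖z‖) :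
    ∃ N : ℕ, 1 ≤ N ∧ ∃ α ∈ Set.Ioo (0 : ℝ) 1, ∃ σ : ℕ → ℝ,
      (∀ k ∈ Finset.Icc 1 N, 0 < σ k) ∧
      1 ≤ ∑ k ∈ Finset.Icc 1 N, σ k ∧
      ∀ xbar : X, ∃ (ν : ℕ → U) (x : ℕ → X),
        x 0 = xbar ∧
        (∀ k < N, x (k + 1) = A (x k) + B (ν k)) ∧
        ∑ k ∈ Finset.Icc 1 N, σ k * ‖x k‖ ≤ (1 - α) * ‖xbar‖ := by
  set K := M * (ρ / (1 - ρ))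
  have hK : 0 ≤ K := mul_nonneg (by linarith) (div_nonneg hρ0.le (by linarith))
  obtain ⟨N, hN⟩ := exists_nat_gt (2 * K)
  have hNpos : (0 : ℝ) < N := by linarith
  refine ⟨N, by exact_mod_cast hNpos, 1 / 2, ⟨by norm_num, by norm_num⟩, fun _ => (N : ℝ)⁻¹,
    fun _ _ => by positivity, (sum_Icc_one_const_inv (by exact_mod_cast hNpos.ne')).ge,
    fun xbar => ⟨fun k => F (((A + B ∘ₗ F) ^ k) xbar), fun k => ((A + B ∘ₗ F) ^ k) xbar,
      rfl, fun k _ => LinearMap.add_comp_pow_succ_apply A B F k xbar, ?_⟩⟩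
  have hsum := sum_Icc_one_le_of_le_geometric (by linarith) (norm_nonneg xbar) hρ0.le hρ1
    (fun k => hstab k xbar) N
  calc ∑ k ∈ Icc 1 N, (N : ℝ)⁻¹ * ‖((A + B ∘ₗ F) ^ k) xbar‖
      = (N : ℝ)⁻¹ * ∑ k ∈ Icc 1 N, ‖((A + B ∘ₗ F) ^ k) xbar‖ := (mul_sum ..).symm
    _ ≤ (N : ℝ)⁻¹ * (K * ‖xbar‖) := by gcongr
    _ ≤ (N : ℝ)⁻¹ * (N / 2 * ‖xbar‖) := by gcongr; linarith
    _ = (1 - 1 / 2) * ‖xbar‖ := by field_simp; ring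

/-- Remark 2: If the LTI system x(t+1) = A x(t) + B u(t) is
exponentially stabilizable by a linear state feedback F, then there are a horizon
N ≥ 1, a decay constant α ∈ (0,1), and positive weights σ₁,…,σ_N summing to at
least 1 such that from every initial state x̄ some predicted input sequence makes
the norm function satisfy the average descent condition. -/
theorem stmt_4 (X U : Type*)
    [NormedAddCommGroup X] [NormedSpace ℝ X] [FiniteDimensional ℝ X]
    [NormedAddCommGroup U] [NormedSpace ℝ U] [FiniteDimensional ℝ U]
    (A : X →ₗ[ℝ] X) (B : U →ₗ[ℝ] X)
    (F : X →ₗ[ℝ] U) (M ρ : ℝ) (hM : 1 ≤ M) (hρ0 : 0 < ρ) (hρ1 : ρ < 1)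
    (hstab : ∀ (t : ℕ) (z : X), ‖((A + B ∘ₗ F) ^ t) z‖ ≤ M * ρ ^ t * ‖z‖) :
    ∃ N : ℕ, 1 ≤ N ∧ ∃ α ∈ Set.Ioo (0 : ℝ) 1, ∃ σ : ℕ → ℝ,
      (∀ k ∈ Finset.Icc 1 N, 0 < σ k) ∧
      1 ≤ ∑ k ∈ Finset.Icc 1 N, σ k ∧
      ∀ xbar : X, ∃ (ν : ℕ → U) (x : ℕ → X),
        x 0 = xbar ∧
        (∀ k < N, x (k + 1) = A (x k) + B (ν k)) ∧
        ∑ k ∈ Finset.Icc 1 N, σ k * ‖x k‖ ≤ (1 - α) * ‖xbar‖ :=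
  stmt_4_general X U A B F M ρ hM hρ0 hρ1 hstab
end

section
/- Let n ≥ 1 and m ≥ 1 be integers, let A be a real n×n matrix, let B be a real n×m matrix, and suppose the controllability matrix 𝒞 = [B, AB, A²B, …, A^{n−1}B] has rank n. Then for every integer N ≥ n and every α ∈ (0,1) there exist positive real numbers σ_1, …, σ_N with σ_1 + ⋯ + σ_N ≥ 1 such that for every x̄ ∈ ℝ^n there exist an input sequence ν_0, …, ν_{N−1} in ℝ^m and states x_0, x_1, …, x_N in ℝ^n with x_0 = x̄, x_{k+1} = A x_k + B ν_k for all 0 ≤ k < N, and Σ_{k=1}^N σ_k·‖x_k‖ ≤ (1−α)·‖x̄‖ (Euclidean norm). -/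
/-!
If the controllability matrix has full rank, the map `u ↦ ∑ i < n, Aⁱ B uᵢ` is onto, and a
linear right inverse of it turns `-Aⁿ x̄` into inputs, linear in `x̄`, that steer `x̄` to `0` in
`n` steps (deadbeat control). Along this trajectory `x_N = 0`, and by finite dimensionality
`∑_{1 ≤ k < N} ‖x_k‖ ≤ c ‖x̄‖` for one constant `c > 0`. Weight `1` on the terminal state and
`(1 - α) / c` on the others then gives the descent inequality.
-/

open Finset Matrix

lemma exists_sum_norm_apply_le {𝕜 E F ι : Type*} [NontriviallyNormedField 𝕜] [CompleteSpace 𝕜]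
    [NormedAddCommGroup E] [NormedSpace 𝕜 E] [FiniteDimensional 𝕜 E]
    [NormedAddCommGroup F] [NormedSpace 𝕜 F] (s : Finset ι) (f : ι → E →ₗ[𝕜] F) :
    ∃ c > 0, ∀ x, ∑ i ∈ s, ‖f i x‖ ≤ c * ‖x‖ := by
  refine ⟨∑ i ∈ s, ‖LinearMap.toContinuousLinearMap (f i)‖ + 1, by positivity, fun x => ?_⟩
  calc ∑ i ∈ s, ‖f i x‖ ≤ ∑ i ∈ s, ‖LinearMap.toContinuousLinearMap (f i)‖ * ‖x‖ :=
        sum_le_sum fun i _ => (LinearMap.toContinuousLinearMap (f i)).le_opNorm x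
    _ ≤ (∑ i ∈ s, ‖LinearMap.toContinuousLinearMap (f i)‖ + 1) * ‖x‖ := by
        rw [← sum_mul]; gcongr; linarith

namespace LinearControl

section Trajectory

variable {R E U : Type*} [Semiring R] [AddCommMonoid E] [Module R E] [AddCommMonoid U] [Module R U]

/-- `x̄ ↦ x k` for the solution of `x (k + 1) = a (x k) + b (ν k)`, `x 0 = x̄`, with the inputs
`ν j = K j x̄` depending linearly on the initial state. -/
def trajectoryMap (a : Module.End R E) (b : U →ₗ[R] E) (K : ℕ → E →ₗ[R] U) :
    ℕ → Module.End R E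
  | 0 => 1
  | k + 1 => a * trajectoryMap a b K k + b ∘ₗ K k

variable (a : Module.End R E) (b : U →ₗ[R] E) (K : ℕ → E →ₗ[R] U)

@[simp]
lemma trajectoryMap_zero : trajectoryMap a b K 0 = 1 := rfl

lemma trajectoryMap_succ (k : ℕ) :
    trajectoryMap a b K (k + 1) = a * trajectoryMap a b K k + b ∘ₗ K k := rfl

lemma trajectoryMap_eq_pow_add_sum (k : ℕ) :
    trajectoryMap a b K k = a ^ k + ∑ i ∈ range k, a ^ i * (b ∘ₗ K (k - 1 - i)) := by
  induction k with
  | zero => simp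
  | succ k ih =>
    rw [trajectoryMap_succ, ih, sum_range_succ', mul_add, mul_sum, pow_succ', add_assoc]
    congr 2
    refine sum_congr rfl fun i _ => ?_
    rw [← mul_assoc, ← pow_succ', show k + 1 - 1 - (i + 1) = k - 1 - i by omega]

end Trajectory

section Deadbeat

variable {R E U : Type*} [Ring R] [AddCommGroup E] [Module R E] [AddCommGroup U] [Module R U]
  (a : Module.End R E) (b : U →ₗ[R] E)

def controllabilityMap (n : ℕ) : (Fin n → U) →ₗ[R] E :=
  ∑ i : Fin n, (a ^ (i : ℕ)) ∘ₗ b ∘ₗ (LinearMap.proj i : (Fin n → U) →ₗ[R] U)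

/-- The input applied at time `k` reaches time `n` multiplied by `aⁿ⁻¹⁻ᵏ`, so it must come from
the gain paired with that power, `G (n - 1 - k)`. -/
def deadbeatGains {n : ℕ} (G : Fin n → E →ₗ[R] U) (k : ℕ) : E →ₗ[R] U :=
  if h : k < n then G ⟨n - 1 - k, by omega⟩ else 0

lemma exists_sum_pow_mul_comp_eq_neg_pow [Module.Projective R E] {n : ℕ}
    (h : LinearMap.range (controllabilityMap a b n) = ⊤) :
    ∃ G : Fin n → E →ₗ[R] U, ∑ i : Fin n, a ^ (i : ℕ) * (b ∘ₗ G i) = -(a ^ n) := by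
  obtain ⟨g, hg⟩ := (controllabilityMap a b n).exists_rightInverse_of_surjective h
  refine ⟨fun i => LinearMap.proj i ∘ₗ g ∘ₗ (-(a ^ n)), LinearMap.ext fun x => ?_⟩
  simpa [controllabilityMap] using LinearMap.congr_fun hg (-(a ^ n) x)

lemma trajectoryMap_deadbeatGains_of_le {n : ℕ} {G : Fin n → E →ₗ[R] U}
    (hG : ∑ i : Fin n, a ^ (i : ℕ) * (b ∘ₗ G i) = -(a ^ n)) {k : ℕ} (hk : n ≤ k) :
    trajectoryMap a b (deadbeatGains G) k = 0 := by
  induction k, hk using Nat.le_induction with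
  | base =>
    rw [trajectoryMap_eq_pow_add_sum, sum_range, add_eq_zero_iff_neg_eq, ← hG]
    refine Fintype.sum_congr _ _ fun i => ?_
    rw [deadbeatGains, dif_pos (by omega)]
    congr
    exact Fin.ext (by dsimp only; omega)
  | succ k hk ih => simp [trajectoryMap_succ, ih, deadbeatGains, Nat.not_lt.mpr hk]

end Deadbeat

section Matrix

variable {𝕜 ι κ : Type*} [RCLike 𝕜] [Fintype ι] [DecidableEq ι] [Fintype κ] {n : ℕ}
    (A : Matrix ι ι 𝕜) (B : Matrix ι κ 𝕜)

/-- `[B, AB, …, Aⁿ⁻¹B]`, column `q` of the block `AⁱB` having index `(i, q)`. -/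
def controllabilityMatrix (n : ℕ) : Matrix ι (Fin n × κ) 𝕜 :=
  of fun i p => (A ^ (p.1 : ℕ) * B) i p.2

lemma controllabilityMatrix_mulVec (v : Fin n × κ → 𝕜) :
    controllabilityMatrix A B n *ᵥ v = ∑ i : Fin n, (A ^ (i : ℕ) * B) *ᵥ fun q => v (i, q) := by
  ext j
  simp [controllabilityMatrix, mulVec, dotProduct, Fintype.sum_prod_type]

lemma controllabilityMap_toEuclideanLin_apply [DecidableEq κ] (u : Fin n → EuclideanSpace 𝕜 κ) :
    controllabilityMap (toEuclideanLin A) (toEuclideanLin B) n u =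
      WithLp.toLp 2 (∑ i : Fin n, (A ^ (i : ℕ) * B) *ᵥ WithLp.ofLp (u i)) := by
  simp [controllabilityMap, ← toLpLin_pow, toLpLin_apply, mulVec_mulVec]

lemma range_controllabilityMap_toEuclideanLin [DecidableEq κ]
    (hrank : (controllabilityMatrix A B n).rank = Fintype.card ι) :
    LinearMap.range (controllabilityMap (toEuclideanLin A) (toEuclideanLin B) n) = ⊤ := by
  have hC : LinearMap.range (controllabilityMatrix A B n).mulVecLin = ⊤ :=
    Submodule.eq_top_of_finrank_eq (by rw [← rank, hrank, Module.finrank_fintype_fun_eq_card])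
  refine LinearMap.range_eq_top.mpr fun y => ?_
  obtain ⟨v, hv⟩ := LinearMap.range_eq_top.mp hC (WithLp.ofLp y)
  refine ⟨fun i => WithLp.toLp 2 fun q => v (i, q), ?_⟩
  rw [controllabilityMap_toEuclideanLin_apply, ← controllabilityMatrix_mulVec, ← mulVecLin_apply,
    hv, WithLp.toLp_ofLp]

end Matrix

def descentWeights (N : ℕ) (ε : ℝ) (k : ℕ) : ℝ := if k = N then 1 else ε

lemma descentWeights_pos {N : ℕ} {ε : ℝ} (hε : 0 < ε) (k : ℕ) : 0 < descentWeights N ε k := by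
  unfold descentWeights; split_ifs <;> positivity

lemma one_le_sum_descentWeights {N : ℕ} {ε : ℝ} (hN : 1 ≤ N) (hε : 0 < ε) :
    1 ≤ ∑ k ∈ Icc 1 N, descentWeights N ε k := by
  rw [← sum_Ico_add_eq_sum_Icc hN, descentWeights, if_pos rfl, le_add_iff_nonneg_left]
  exact sum_nonneg fun k _ => (descentWeights_pos hε k).le

lemma sum_descentWeights_mul {N : ℕ} {v : ℕ → ℝ} (hN : 1 ≤ N) (hv : v N = 0) (ε : ℝ) :
    ∑ k ∈ Icc 1 N, descentWeights N ε k * v k = ε * ∑ k ∈ Ico 1 N, v k := by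
  rw [← sum_Ico_add_eq_sum_Icc hN, hv, mul_zero, add_zero, mul_sum]
  refine sum_congr rfl fun k hk => ?_
  rw [descentWeights, if_neg (mem_Ico.mp hk).2.ne]

end LinearControl

open LinearControl

theorem stmt_6_general (n m : ℕ) (hn : 1 ≤ n)
    (A : Matrix (Fin n) (Fin n) ℝ) (B : Matrix (Fin n) (Fin m) ℝ)
    (hrank : (Matrix.of fun (i : Fin n) (p : Fin n × Fin m) =>
        (A ^ (p.1 : ℕ) * B) i p.2).rank = n) :
    ∀ N : ℕ, n ≤ N → ∀ α ∈ Set.Ioo (0 : ℝ) 1, ∃ σ : ℕ → ℝ,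
      (∀ k ∈ Finset.Icc 1 N, 0 < σ k) ∧
      1 ≤ ∑ k ∈ Finset.Icc 1 N, σ k ∧
      ∀ xbar : EuclideanSpace ℝ (Fin n),
        ∃ (ν : ℕ → EuclideanSpace ℝ (Fin m)) (x : ℕ → EuclideanSpace ℝ (Fin n)),
          x 0 = xbar ∧
          (∀ k < N, x (k + 1) =
            Matrix.toEuclideanLin A (x k) + Matrix.toEuclideanLin B (ν k)) ∧
          ∑ k ∈ Finset.Icc 1 N, σ k * ‖x k‖ ≤ (1 - α) * ‖xbar‖ := by
  rintro N hN α ⟨-, hα1⟩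
  have hN1 : 1 ≤ N := hn.trans hN
  obtain ⟨G, hG⟩ := exists_sum_pow_mul_comp_eq_neg_pow (toEuclideanLin A) (toEuclideanLin B)
    (range_controllabilityMap_toEuclideanLin A B (hrank.trans (Fintype.card_fin n).symm))
  set Φ := trajectoryMap (toEuclideanLin A) (toEuclideanLin B) (deadbeatGains G)
  obtain ⟨c, hc, hΦ⟩ := exists_sum_norm_apply_le (Ico 1 N) Φ
  have hε : 0 < (1 - α) / c := div_pos (by linarith) hc
  refine ⟨descentWeights N ((1 - α) / c), fun k _ => descentWeights_pos hε k,
    one_le_sum_descentWeights hN1 hε, fun xbar =>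
      ⟨fun k => deadbeatGains G k xbar, fun k => Φ k xbar, rfl, fun k _ => rfl, ?_⟩⟩
  have hΦN : Φ N = 0 := trajectoryMap_deadbeatGains_of_le _ _ hG hN
  calc ∑ k ∈ Icc 1 N, descentWeights N ((1 - α) / c) k * ‖Φ k xbar‖
      = (1 - α) / c * ∑ k ∈ Ico 1 N, ‖Φ k xbar‖ := by
        rw [sum_descentWeights_mul hN1 (by rw [hΦN, LinearMap.zero_apply, norm_zero])]
    _ ≤ (1 - α) / c * (c * ‖xbar‖) := by gcongr; exact hΦ xbar
    _ = (1 - α) * ‖xbar‖ := by field_simp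

/-- Remark 2, controllable case: if the controllability matrix of
(A, B) has rank n, then for every horizon N ≥ n and every decay constant
α ∈ (0,1) one can choose positive weights σ₁,…,σ_N summing to at least 1 so that
from every initial state the average descent condition for V = Euclidean norm is
satisfied along some predicted trajectory. -/
theorem stmt_6 (n m : ℕ) (hn : 1 ≤ n) (hm : 1 ≤ m)
    (A : Matrix (Fin n) (Fin n) ℝ) (B : Matrix (Fin n) (Fin m) ℝ)
    (hrank : (Matrix.of fun (i : Fin n) (p : Fin n × Fin m) =>
        (A ^ (p.1 : ℕ) * B) i p.2).rank = n) :
    ∀ N : ℕ, n ≤ N → ∀ α ∈ Set.Ioo (0 : ℝ) 1, ∃ σ : ℕ → ℝ,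
      (∀ k ∈ Finset.Icc 1 N, 0 < σ k) ∧
      1 ≤ ∑ k ∈ Finset.Icc 1 N, σ k ∧
      ∀ xbar : EuclideanSpace ℝ (Fin n),
        ∃ (ν : ℕ → EuclideanSpace ℝ (Fin m)) (x : ℕ → EuclideanSpace ℝ (Fin n)),
          x 0 = xbar ∧
          (∀ k < N, x (k + 1) =
            Matrix.toEuclideanLin A (x k) + Matrix.toEuclideanLin B (ν k)) ∧
          ∑ k ∈ Finset.Icc 1 N, σ k * ‖x k‖ ≤ (1 - α) * ‖xbar‖ :=
  stmt_6_general n m hn A B hrank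
end

section
/- Let U be a real vector space of finite dimension m ≥ 1 with basis b_0, b_1, …, b_{m−1}, let d ≥ 1 be an integer, and let T ≥ (m+1)·d − 1 be an integer. Define the sequence v_0, v_1, …, v_{T−1} in U by v_k = b_i if k = (i+1)·d − 1 for some i ∈ {0, …, m−1}, and v_k = 0 otherwise. Then v is persistently exciting of order d, i.e., the T − d + 1 windows (v_j, v_{j+1}, …, v_{j+d−1}), for 0 ≤ j ≤ T − d, span the vector space U^d. -/
/-! The spikes `bᵢ` sit at positions `(i+1)d - 1`, exactly `d` apart, so a window of length `d`
contains at most one of them. The window that carries the spike `bᵢ` in its slot `s` is therefore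
`Pi.single s bᵢ`, and these vectors form the standard basis of `U^d`. -/

theorem Nat.eq_of_mul_add_eq_mul_add {d a a' s s' : ℕ} (hs : s < d) (hs' : s' < d)
    (h : a * d + s = a' * d + s') : s = s' := by
  simpa [Nat.mod_eq_of_lt hs, Nat.mod_eq_of_lt hs'] using congrArg (· % d) h

theorem Nat.succ_mul_add_self_le_of_lt {i m d : ℕ} (hi : i < m) : (i + 1) * d + d ≤ (m + 1) * d := by
  have : (i + 2) * d ≤ (m + 1) * d := Nat.mul_le_mul_right d (by omega)
  linarith

theorem window_before_spike_eq_single {U : Type*} [Zero U] {m d T : ℕ}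
    (hT : (m + 1) * d - 1 ≤ T) (b : Fin m → U) (v : ℕ → U)
    (hvb : ∀ i : Fin m, v (((i : ℕ) + 1) * d - 1) = b i)
    (hv0 : ∀ k < T, (∀ i : Fin m, k ≠ ((i : ℕ) + 1) * d - 1) → v k = 0) (i : Fin m) (s : Fin d) :
    (fun s' : Fin d => v ((((i : ℕ) + 1) * d - 1 - s) + s')) = Pi.single s (b i) := by
  have hd : d ≤ ((i : ℕ) + 1) * d := Nat.le_mul_of_pos_left d (Nat.succ_pos _)
  have hend := Nat.succ_mul_add_self_le_of_lt (d := d) i.isLt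
  funext s'
  by_cases hs : s' = s
  · subst hs
    rw [Pi.single_eq_same, Nat.sub_add_cancel (by omega), hvb]
  · rw [Pi.single_eq_of_ne hs]
    refine hv0 _ (by omega) fun i' heq => hs (Fin.ext ?_)
    have hd' : d ≤ ((i' : ℕ) + 1) * d := Nat.le_mul_of_pos_left d (Nat.succ_pos _)
    exact Nat.eq_of_mul_add_eq_mul_add (a := (i : ℕ) + 1) (a' := (i' : ℕ) + 1) s'.isLt s.isLt
      (by omega)

theorem stmt_7_general (U : Type*) [AddCommGroup U] [Module ℝ U]
    (m : ℕ) (b : Module.Basis (Fin m) ℝ U)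
    (d : ℕ) (T : ℕ) (hT : (m + 1) * d - 1 ≤ T)
    (v : ℕ → U)
    (hvb : ∀ i : Fin m, v (((i : ℕ) + 1) * d - 1) = b i)
    (hv0 : ∀ k < T, (∀ i : Fin m, k ≠ ((i : ℕ) + 1) * d - 1) → v k = 0) :
    Submodule.span ℝ
      {w : Fin d → U | ∃ j : ℕ, j + d ≤ T ∧ w = fun s : Fin d => v (j + s)} = ⊤ := by
  rw [eq_top_iff, ← (Pi.basis fun _ : Fin d => b).span_eq, Submodule.span_le]
  rintro _ ⟨⟨s, i⟩, rfl⟩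
  have hd : d ≤ ((i : ℕ) + 1) * d := Nat.le_mul_of_pos_left d (Nat.succ_pos _)
  have hend := Nat.succ_mul_add_self_le_of_lt (d := d) i.isLt
  have hs := s.isLt
  refine Submodule.subset_span ⟨((i : ℕ) + 1) * d - 1 - s, by omega, ?_⟩
  rw [Pi.basis_apply, window_before_spike_eq_single hT b v hvb hv0]

/-- Example 2: in a real vector space U of dimension m with basis
b₀,…,b_{m-1}, the sequence of length T ≥ (m+1)d - 1 whose value at index
(i+1)·d - 1 is bᵢ (for i = 0,…,m-1) and which vanishes at all other indices is
persistently exciting of order d: its windows of length d span U^d. -/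
theorem stmt_7 (U : Type*) [AddCommGroup U] [Module ℝ U]
    (m : ℕ) (hm : 1 ≤ m) (b : Module.Basis (Fin m) ℝ U)
    (d : ℕ) (hd : 1 ≤ d) (T : ℕ) (hT : (m + 1) * d - 1 ≤ T)
    (v : ℕ → U)
    (hvb : ∀ i : Fin m, v (((i : ℕ) + 1) * d - 1) = b i)
    (hv0 : ∀ k < T, (∀ i : Fin m, k ≠ ((i : ℕ) + 1) * d - 1) → v k = 0) :
    Submodule.span ℝ
      {w : Fin d → U | ∃ j : ℕ, j + d ≤ T ∧ w = fun s : Fin d => v (j + s)} = ⊤ :=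
  stmt_7_general U m b d T hT v hvb hv0
end

section
/- Let m ≥ 1, d ≥ 1, and T ≥ (m+1)·d − 1 be integers. Let u_0, …, u_{T−1} be independent ℝ^m-valued random variables on a probability space (Ω, ℱ, ℙ) such that, for each i, the law of u_i is absolutely continuous with respect to the Lebesgue measure on ℝ^m. Then, almost surely, the sequence (u_0, …, u_{T−1}) is persistently exciting of order d, i.e., almost surely the T − d + 1 windows (u_j, u_{j+1}, …, u_{j+d−1}), for 0 ≤ j ≤ T − d, span (ℝ^m)^d. -/
/-!
Over any commutative ring, the first `m * d` windows of a sequence, written in suitable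
coordinates, form a square matrix whose determinant is a polynomial in the entries of the
sequence. This polynomial is nonzero because it evaluates to `1` at the staircase input of
Example 2. The zero set of a nonzero real polynomial is Lebesgue-null (Fubini and induction on
the number of variables), and independence makes the joint law of the inputs the product of
their laws, which is absolutely continuous. Hence almost surely the determinant is nonzero, and
then the windows span.
-/

open MeasureTheory MvPolynomial Set

namespace MeasureTheory

theorem Measure.AbsolutelyContinuous.pi_fin (n : ℕ) :
    ∀ {α : Fin n → Type*} [∀ i, MeasurableSpace (α i)] {μ ν : ∀ i, Measure (α i)}
      [∀ i, SigmaFinite (μ i)] [∀ i, SigmaFinite (ν i)],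
      (∀ i, μ i ≪ ν i) → Measure.pi μ ≪ Measure.pi ν := by
  induction n with
  | zero =>
    intro α _ μ ν _ _ _
    rw [Measure.pi_of_empty μ isEmptyElim, Measure.pi_of_empty ν isEmptyElim]
  | succ n ih =>
    intro α _ μ ν _ _ h
    rw [← (MeasurePreserving.symm _ (measurePreserving_piFinSuccAbove μ 0)).map_eq,
      ← (MeasurePreserving.symm _ (measurePreserving_piFinSuccAbove ν 0)).map_eq]
    exact ((h 0).prod (ih fun j => h _)).map (MeasurableEquiv.measurable _)

theorem Measure.AbsolutelyContinuous.pi {ι : Type*} [Fintype ι] {α : ι → Type*}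
    [∀ i, MeasurableSpace (α i)] {μ ν : ∀ i, Measure (α i)}
    [∀ i, SigmaFinite (μ i)] [∀ i, SigmaFinite (ν i)] (h : ∀ i, μ i ≪ ν i) :
    Measure.pi μ ≪ Measure.pi ν := by
  let e := (Fintype.equivFin ι).symm
  rw [← Measure.pi_map_piCongrLeft e μ, ← Measure.pi_map_piCongrLeft e ν]
  exact (pi_fin _ fun j => h (e j)).map (MeasurableEquiv.measurable _)

theorem measurePreserving_curry {ι κ X : Type*} [Fintype ι] [Fintype κ] [MeasurableSpace X]
    (μ : Measure X) [SigmaFinite μ] :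
    MeasurePreserving (MeasurableEquiv.curry ι κ X) (Measure.pi fun _ => μ)
      (Measure.pi fun _ => Measure.pi fun _ => μ) := by
  refine ⟨(MeasurableEquiv.curry ι κ X).measurable, (Measure.pi_eq_generateFrom
    (fun _ => generateFrom_pi) (fun _ => isPiSystem_pi)
    (fun _ => Measure.FiniteSpanningSetsIn.pi fun _ => μ.toFiniteSpanningSetsIn) ?_).symm⟩
  intro s hs
  choose t ht hts using hs
  have hpre : MeasurableEquiv.curry ι κ X ⁻¹' univ.pi s = univ.pi fun q => t q.1 q.2 := by
    ext x
    simp [← hts, MeasurableEquiv.coe_curry]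
  rw [MeasurableEquiv.map_apply, hpre, Measure.pi_pi, ← Finset.univ_product_univ,
    Finset.prod_product]
  simp only [← hts, Measure.pi_pi]

end MeasureTheory

namespace MvPolynomial

theorem ae_eval_ne_zero_fin : ∀ {n : ℕ} {p : MvPolynomial (Fin n) ℝ}, p ≠ 0 →
    ∀ᵐ x ∂(volume : Measure (Fin n → ℝ)), eval x p ≠ 0
  | 0, p, hp => by
    obtain ⟨c, rfl⟩ := C_surjective (Fin 0) p
    exact ae_of_all _ fun x => by simpa using hp
  | n + 1, p, hp => by
    obtain ⟨k, hk⟩ : ∃ k, (finSuccEquiv ℝ n p).coeff k ≠ 0 := by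
      by_contra! h
      exact hp ((finSuccEquiv ℝ n).injective (by ext1 k; simp [h]))
    have hslice : ∀ᵐ s ∂(volume : Measure (Fin n → ℝ)),
        ∀ᵐ y ∂(volume : Measure ℝ), eval (Fin.cons y s) p ≠ 0 := by
      filter_upwards [ae_eval_ne_zero_fin hk] with s hs
      have hq : (finSuccEquiv ℝ n p).map (eval s) ≠ 0 := fun h =>
        hs (by simpa using congrArg (Polynomial.coeff · k) h)
      rw [ae_iff]
      simpa [eval_eq_eval_mv_eval'] using
        (Polynomial.finite_setOfPred_isRoot hq).measure_zero volume
    have hmeas : MeasurableSet {z : ℝ × (Fin n → ℝ) | eval (Fin.cons z.1 z.2) p ≠ 0} :=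
      (measurableSet_singleton 0).compl.preimage
        ((continuous_eval p).comp (continuous_fst.finCons continuous_snd)).measurable
    have hprod : ∀ᵐ z ∂(volume : Measure ℝ).prod (volume : Measure (Fin n → ℝ)),
        eval (Fin.cons z.1 z.2) p ≠ 0 := by
      rw [Measure.ae_prod_iff_ae_ae hmeas, Measure.ae_ae_comm hmeas]
      exact hslice
    simpa [Fin.cons_self_tail] using
      (volume_preserving_piFinSuccAbove (fun _ => ℝ) 0).quasiMeasurePreserving.ae hprod

theorem ae_eval_ne_zero {σ : Type*} [Fintype σ] {p : MvPolynomial σ ℝ} (hp : p ≠ 0) :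
    ∀ᵐ x ∂(volume : Measure (σ → ℝ)), eval x p ≠ 0 := by
  let e := Fintype.equivFin σ
  have hp' : rename e p ≠ 0 := fun h =>
    hp (rename_injective _ e.injective (by rw [h, map_zero]))
  filter_upwards [(volume_measurePreserving_piCongrLeft (fun _ => ℝ) e).quasiMeasurePreserving.ae
    (ae_eval_ne_zero_fin hp')] with x hx
  simpa [eval_rename, Function.comp_def, MeasurableEquiv.coe_piCongrLeft] using hx

theorem ae_eval_uncurry_ne_zero {ι κ : Type*} [Fintype ι] [Fintype κ]
    {μ : ι → Measure (κ → ℝ)} [∀ i, SigmaFinite (μ i)] (hμ : ∀ i, μ i ≪ volume)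
    {p : MvPolynomial (ι × κ) ℝ} (hp : p ≠ 0) :
    ∀ᵐ x ∂Measure.pi μ, eval (Function.uncurry x) p ≠ 0 :=
  (Measure.AbsolutelyContinuous.pi hμ).ae_le <|
    (MeasurePreserving.symm _ (measurePreserving_curry volume)).quasiMeasurePreserving.ae
      (ae_eval_ne_zero hp)

end MvPolynomial

section Windows

variable {T : ℕ}

def windows {E : Type*} (d : ℕ) (x : Fin T → E) : Set (Fin d → E) :=
  {w | ∃ j : ℕ, ∃ hj : j + d ≤ T,
    w = fun s : Fin d => x ⟨j + s, lt_of_lt_of_le (Nat.add_lt_add_left s.isLt j) hj⟩}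

def PersistentlyExciting (K : Type*) {E : Type*} [Semiring K] [AddCommMonoid E] [Module K E]
    (d : ℕ) (x : Fin T → E) : Prop :=
  Submodule.span K (windows d x) = ⊤

variable {m d : ℕ}

/-- Row `k` is the window starting at `k`; column `b` reads component `b / d` at position
`d - 1 - b % d` of the window. Reversing the position makes the staircase matrix lower
unitriangular. -/
def windowMatrix {R : Type*} (hT : m * d + d ≤ T + 1) (x : Fin T → Fin m → R) :
    Matrix (Fin (m * d)) (Fin (m * d)) R :=
  fun k b => x ⟨k + b.modNat.rev, by have := k.isLt; have := b.modNat.rev.isLt; omega⟩ b.divNat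

theorem windowMatrix_map {R S : Type*} [Semiring R] [Semiring S] (f : R →+* S)
    (hT : m * d + d ≤ T + 1) (x : Fin T → Fin m → R) :
    (windowMatrix hT x).map f = windowMatrix hT fun t p => f (x t p) :=
  rfl

theorem persistentlyExciting_of_det_windowMatrix_ne_zero {K : Type*} [Field K]
    (hT : m * d + d ≤ T + 1) (x : Fin T → Fin m → K) (h : (windowMatrix hT x).det ≠ 0) :
    PersistentlyExciting K d x := by
  let coords : (Fin d → Fin m → K) →ₗ[K] Fin (m * d) → K :=
    { toFun w b := w b.modNat.rev b.divNat
      map_add' _ _ := rfl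
      map_smul' _ _ := rfl }
  let window (k : Fin (m * d)) : Fin d → Fin m → K := fun s =>
    x ⟨k + s, by have := k.isLt; have := s.isLt; omega⟩
  have hli : LinearIndependent K window :=
    LinearIndependent.of_comp coords (Matrix.linearIndependent_rows_of_det_ne_zero h)
  have hspan := hli.span_eq_top_of_card_eq_finrank' <| by
    rw [Module.finrank_pi_fintype]
    simp [mul_comm]
  refine eq_top_iff.2 (hspan ▸ Submodule.span_mono ?_)
  rintro _ ⟨k, rfl⟩
  exact ⟨k, by have := k.isLt; omega, rfl⟩

/-- The input of Example 2: `d - 1` zeros, then each unit vector `e p` repeated `d` times. -/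
def staircase (R : Type*) [Zero R] [One R] (m d T : ℕ) : Fin T → Fin m → R :=
  fun t p => if (t + 1 : ℕ) / d = p + 1 then 1 else 0

theorem det_windowMatrix_staircase {R : Type*} [CommRing R] (hT : m * d + d ≤ T + 1) :
    (windowMatrix hT (staircase R m d T)).det = 1 := by
  have hentry (k b : Fin (m * d)) : windowMatrix hT (staircase R m d T) k b =
      if (k + (d - (b % d + 1)) + 1) / d = b / d + 1 then 1 else 0 :=
    rfl
  have hdiv (b : Fin (m * d)) : d * (b / d) + b % d = b := Nat.div_add_mod b d
  have hmod (b : Fin (m * d)) : b % d < d := b.modNat.isLt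
  -- the entry at `(k, b)` is `1` exactly when `b ≤ k < b + d`
  rw [Matrix.det_of_isLowerTriangular]
  · refine Finset.prod_eq_one fun b _ => ?_
    have hnum : (b : ℕ) + (d - (b % d + 1)) + 1 = d * (b / d + 1) := by
      have := hdiv b; have := hmod b; rw [mul_add_one]; omega
    rw [hentry, if_pos (by rw [hnum, Nat.mul_div_cancel_left _ (by have := hmod b; omega)])]
  · intro k b hbk
    have hkb : (k : ℕ) < b := hbk
    rw [hentry, if_neg]
    refine (Nat.div_lt_of_lt_mul ?_).ne
    have := hdiv b; have := hmod b; rw [mul_add_one]; omega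

end Windows

section WindowDeterminant

variable (R : Type*) [CommRing R] {m d T : ℕ} (hT : m * d + d ≤ T + 1)

noncomputable def windowDetPoly : MvPolynomial (Fin T × Fin m) R :=
  (windowMatrix hT fun t p => X (t, p)).det

variable {R}

theorem eval_windowDetPoly (x : Fin T → Fin m → R) :
    eval (Function.uncurry x) (windowDetPoly R hT) = (windowMatrix hT x).det := by
  rw [windowDetPoly, RingHom.map_det, RingHom.mapMatrix_apply, windowMatrix_map]
  simp only [eval_X, Function.uncurry_apply_pair]

theorem windowDetPoly_ne_zero [Nontrivial R] : windowDetPoly R hT ≠ 0 := fun h => by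
  simpa [h, det_windowMatrix_staircase] using eval_windowDetPoly hT (staircase R m d T)

end WindowDeterminant

theorem stmt_8_general (m d T : ℕ) (hT : (m + 1) * d - 1 ≤ T)
    (Ω : Type*) [MeasurableSpace Ω] (P : Measure Ω) [IsProbabilityMeasure P]
    (u : Fin T → Ω → (Fin m → ℝ))
    (hmeas : ∀ i, Measurable (u i))
    (hindep : ProbabilityTheory.iIndepFun u P)
    (hac : ∀ i, P.map (u i) ≪ (volume : Measure (Fin m → ℝ))) :
    ∀ᵐ ω ∂P,
      Submodule.span ℝ
        {w : Fin d → (Fin m → ℝ) | ∃ j : ℕ, ∃ hj : j + d ≤ T,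
          w = fun s : Fin d =>
            u ⟨j + s, lt_of_lt_of_le (Nat.add_lt_add_left s.isLt j) hj⟩ ω} = ⊤ := by
  have hT' : m * d + d ≤ T + 1 := by rw [add_one_mul] at hT; omega
  have hlaw : P.map (fun ω i => u i ω) = Measure.pi fun i => P.map (u i) :=
    hindep.map_fun_eq_pi_map fun i => (hmeas i).aemeasurable
  have hgeneric := MvPolynomial.ae_eval_uncurry_ne_zero hac (windowDetPoly_ne_zero (R := ℝ) hT')
  rw [← hlaw] at hgeneric
  filter_upwards [ae_of_ae_map (measurable_pi_lambda _ hmeas).aemeasurable hgeneric] with ω hω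
  rw [eval_windowDetPoly] at hω
  exact persistentlyExciting_of_det_windowMatrix_ne_zero hT' _ hω

/-- independent ℝ^m-valued random variables u₀,…,u_{T-1} whose laws
are absolutely continuous with respect to Lebesgue measure form, almost surely, a
persistently exciting sequence of order d, provided T ≥ (m+1)d - 1: almost surely
the windows of length d span (ℝ^m)^d. -/
theorem stmt_8 (m d T : ℕ) (hm : 1 ≤ m) (hd : 1 ≤ d) (hT : (m + 1) * d - 1 ≤ T)
    (Ω : Type*) [MeasurableSpace Ω] (P : Measure Ω) [IsProbabilityMeasure P]
    (u : Fin T → Ω → (Fin m → ℝ))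
    (hmeas : ∀ i, Measurable (u i))
    (hindep : ProbabilityTheory.iIndepFun u P)
    (hac : ∀ i, P.map (u i) ≪ (volume : Measure (Fin m → ℝ))) :
    ∀ᵐ ω ∂P,
      Submodule.span ℝ
        {w : Fin d → (Fin m → ℝ) | ∃ j : ℕ, ∃ hj : j + d ≤ T,
          w = fun s : Fin d =>
            u ⟨j + s, lt_of_lt_of_le (Nat.add_lt_add_left s.isLt j) hj⟩ ω} = ⊤ :=
  stmt_8_general m d T hT Ω P u hmeas hindep hac
end

section
/- Let X and U be finite-dimensional real normed vector spaces, let A : X → X and B : U → X be linear maps, let N ≥ 1 be an integer, let σ_1, …, σ_N be positive real numbers with σ_1 + ⋯ + σ_N ≥ 1, let α ∈ (0,1), and let V : X → ℝ be a function for which there exist positive constants c, C, p with c·‖x‖^p ≤ V(x) ≤ C·‖x‖^p for all x ∈ X. Assume V is a generalized discrete-time control Lyapunov function: for every x̄ ∈ X there exist ν_0, …, ν_{N−1} in U such that the states x_0 = x̄, x_{k+1} = A x_k + B ν_k satisfy Σ_{k=1}^N σ_k·V(x_k) ≤ (1−α)·V(x_0). Then there exist M > 0 and λ ∈ (0,1)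 such that for every x̄ ∈ X there exists an input sequence u : ℕ → U for which the solution x : ℕ → X of x(t+1) = A x(t) + B u(t) with x(0) = x̄ satisfies ‖x(t)‖ ≤ M·λ^t·‖x̄‖ for all t ∈ ℕ. -/
/-- if a function V sandwiched between c‖x‖^p and C‖x‖^p is a
generalized discrete-time control Lyapunov function for the LTI system
x(t+1) = A x(t) + B u(t) (with horizon N, positive weights σ₁,…,σ_N summing to at
least 1, and decay constant α ∈ (0,1)), then there are uniform constants M > 0 and
λ ∈ (0,1) such that from every initial state some input sequence drives the state
to the origin exponentially fast. -/
theorem stmt_13 (X U : Type*)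
    [NormedAddCommGroup X] [NormedSpace ℝ X] [FiniteDimensional ℝ X]
    [NormedAddCommGroup U] [NormedSpace ℝ U] [FiniteDimensional ℝ U]
    (A : X →ₗ[ℝ] X) (B : U →ₗ[ℝ] X)
    (N : ℕ) (hN : 1 ≤ N) (σ : ℕ → ℝ)
    (hσpos : ∀ k ∈ Finset.Icc 1 N, 0 < σ k)
    (hσsum : 1 ≤ ∑ k ∈ Finset.Icc 1 N, σ k)
    (α : ℝ) (hα0 : 0 < α) (hα1 : α < 1)
    (V : X → ℝ) (c C p : ℝ) (hc : 0 < c) (hC : 0 < C) (hp : 0 < p)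
    (hlow : ∀ z : X, c * ‖z‖ ^ p ≤ V z)
    (hup : ∀ z : X, V z ≤ C * ‖z‖ ^ p)
    (hGDCLF : ∀ xbar : X, ∃ (ν : ℕ → U) (x : ℕ → X),
      x 0 = xbar ∧
      (∀ k < N, x (k + 1) = A (x k) + B (ν k)) ∧
      ∑ k ∈ Finset.Icc 1 N, σ k * V (x k) ≤ (1 - α) * V (x 0)) :
    ∃ M > 0, ∃ lam ∈ Set.Ioo (0 : ℝ) 1,
      ∀ xbar : X, ∃ (u : ℕ → U) (x : ℕ → X),
        x 0 = xbar ∧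
        (∀ t : ℕ, x (t + 1) = A (x t) + B (u t)) ∧
        ∀ t : ℕ, ‖x t‖ ≤ M * lam ^ t * ‖xbar‖ := by
  classical
  have h1α : 0 < 1 - α := by linarith
  have hV0 : ∀ z : X, 0 ≤ V z := fun z => le_trans (by positivity) (hlow z)
  have hIcc : (Finset.Icc 1 N).Nonempty := ⟨1, by simp [hN]⟩
  set σmin : ℝ := (Finset.Icc 1 N).inf' hIcc σ with hσmin_def
  have hσminpos : 0 < σmin := (Finset.lt_inf'_iff hIcc).mpr hσpos
  have hσmin_le : ∀ j ∈ Finset.Icc 1 N, σmin ≤ σ j := fun j hj => Finset.inf'_le σ hj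
  set Kσ : ℝ := (1 - α) / σmin with hKσ_def
  have hKσ0 : 0 ≤ Kσ := by positivity
  set K : ℝ := max 1 Kσ with hK_def
  have hK1 : (1:ℝ) ≤ K := le_max_left _ _
  have hK0 : (0:ℝ) < K := lt_of_lt_of_le one_pos hK1
  -- step lemma
  have key : ∀ z : X, ∃ (ν : ℕ → U) (w : ℕ → X) (k : ℕ),
      w 0 = z ∧ (∀ j < N, w (j + 1) = A (w j) + B (ν j)) ∧
      1 ≤ k ∧ k ≤ N ∧ V (w k) ≤ (1 - α) * V z ∧
      (∀ j, 1 ≤ j → j ≤ N → V (w j) ≤ Kσ * V z) := by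
    intro z
    obtain ⟨ν, w, h0, hdyn, hsum⟩ := hGDCLF z
    rw [h0] at hsum
    have hterm : ∀ j ∈ Finset.Icc 1 N, 0 ≤ σ j * V (w j) :=
      fun j hj => mul_nonneg (hσpos j hj).le (hV0 _)
    have hexk : ∃ k, 1 ≤ k ∧ k ≤ N ∧ V (w k) ≤ (1 - α) * V z := by
      by_contra h
      push_neg at h
      have hlt : ∑ j ∈ Finset.Icc 1 N, σ j * ((1 - α) * V z)
          < ∑ j ∈ Finset.Icc 1 N, σ j * V (w j) := by
        refine Finset.sum_lt_sum_of_nonempty hIcc ?_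
        intro j hj
        have hj' := Finset.mem_Icc.mp hj
        exact mul_lt_mul_of_pos_left (h j hj'.1 hj'.2) (hσpos j hj)
      rw [← Finset.sum_mul] at hlt
      have h1 : (1 - α) * V z ≤ (∑ j ∈ Finset.Icc 1 N, σ j) * ((1 - α) * V z) := by
        have : (0:ℝ) ≤ (1 - α) * V z := mul_nonneg h1α.le (hV0 z)
        nlinarith
      linarith
    obtain ⟨k, hk1, hkN, hkdec⟩ := hexk
    refine ⟨ν, w, k, h0, hdyn, hk1, hkN, hkdec, ?_⟩
    intro j hj1 hjN
    have hjmem : j ∈ Finset.Icc 1 N := Finset.mem_Icc.mpr ⟨hj1, hjN⟩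
    have hsingle : σ j * V (w j) ≤ ∑ i ∈ Finset.Icc 1 N, σ i * V (w i) :=
      Finset.single_le_sum hterm hjmem
    have h2 : σ j * V (w j) ≤ (1 - α) * V z := le_trans hsingle hsum
    have h3 : σmin * V (w j) ≤ (1 - α) * V z :=
      le_trans (mul_le_mul_of_nonneg_right (hσmin_le j hjmem) (hV0 _)) h2
    rw [hKσ_def, div_mul_eq_mul_div, le_div_iff₀ hσminpos]
    linarith [h3]
  choose ν w k hw0 hwdyn hk1 hkN hkdec hbnd using key
  -- constants
  have hNR : (0:ℝ) < (N:ℝ) := by exact_mod_cast Nat.lt_of_lt_of_le Nat.zero_lt_one hN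
  set lam0 : ℝ := (1 - α) ^ ((N:ℝ)⁻¹) with hlam0_def
  have hlam0pos : 0 < lam0 := Real.rpow_pos_of_pos h1α _
  have hlam0lt1 : lam0 < 1 := Real.rpow_lt_one h1α.le (by linarith) (by positivity)
  have hlamN : lam0 ^ N = 1 - α := by
    rw [hlam0_def, ← Real.rpow_natCast ((1 - α) ^ ((N:ℝ)⁻¹)) N, ← Real.rpow_mul h1α.le,
      inv_mul_cancel₀ (ne_of_gt hNR), Real.rpow_one]
  set E : ℝ := K * C / (c * (1 - α)) with hE_def
  have hE : 0 < E := by positivity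
  refine ⟨E ^ p⁻¹, Real.rpow_pos_of_pos hE _, lam0 ^ p⁻¹,
    ⟨Real.rpow_pos_of_pos hlam0pos _,
     Real.rpow_lt_one hlam0pos.le hlam0lt1 (by positivity)⟩, ?_⟩
  intro xbar
  -- the iterated machine
  set step : X × ℕ × ℕ → X × ℕ × ℕ := fun s =>
    if s.2.1 + 1 = k s.1 then (w s.1 (s.2.1 + 1), 0, s.2.2 + 1)
    else (s.1, s.2.1 + 1, s.2.2) with hstep_def
  set ϕ : ℕ → X × ℕ × ℕ := fun t => step^[t] (xbar, 0, 0) with hϕ_def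
  have hϕ0 : ϕ 0 = (xbar, 0, 0) := rfl
  have hϕsucc : ∀ t, ϕ (t + 1) = step (ϕ t) := by
    intro t
    simp only [hϕ_def, Function.iterate_succ_apply']
  -- invariant
  have hinv : ∀ t : ℕ, (ϕ t).2.1 < k (ϕ t).1 ∧
      V (ϕ t).1 ≤ (1 - α) ^ (ϕ t).2.2 * V xbar ∧
      t ≤ (ϕ t).2.2 * N + (ϕ t).2.1 := by
    intro t
    induction t with
    | zero =>
      rw [hϕ0]
      exact ⟨hk1 xbar, by simp, by simp⟩
    | succ t ih =>
      obtain ⟨ih1, ih2, ih3⟩ := ih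
      have hkNz := hkN (ϕ t).1
      by_cases hres : (ϕ t).2.1 + 1 = k (ϕ t).1
      · rw [hϕsucc, hstep_def]
        simp only [if_pos hres]
        refine ⟨hk1 _, ?_, ?_⟩
        · have h4 : V (w (ϕ t).1 ((ϕ t).2.1 + 1)) ≤ (1 - α) * V (ϕ t).1 := by
            rw [hres]; exact hkdec _
          calc V (w (ϕ t).1 ((ϕ t).2.1 + 1)) ≤ (1 - α) * V (ϕ t).1 := h4
            _ ≤ (1 - α) * ((1 - α) ^ (ϕ t).2.2 * V xbar) :=
                mul_le_mul_of_nonneg_left ih2 h1α.le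
            _ = (1 - α) ^ ((ϕ t).2.2 + 1) * V xbar := by ring
        · have hkp : (ϕ t).2.1 + 1 ≤ N := hres ▸ hkNz
          calc t + 1 ≤ (ϕ t).2.2 * N + (ϕ t).2.1 + 1 := by omega
            _ ≤ (ϕ t).2.2 * N + N := by omega
            _ = ((ϕ t).2.2 + 1) * N + 0 := by ring
      · rw [hϕsucc, hstep_def]
        simp only [if_neg hres]
        refine ⟨?_, ih2, by omega⟩
        omega
  -- assemble
  refine ⟨fun t => ν (ϕ t).1 (ϕ t).2.1, fun t => w (ϕ t).1 (ϕ t).2.1, ?_, ?_, ?_⟩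
  · show w (ϕ 0).1 (ϕ 0).2.1 = xbar
    rw [hϕ0]; exact hw0 xbar
  · intro t
    show w (ϕ (t+1)).1 (ϕ (t+1)).2.1
        = A (w (ϕ t).1 (ϕ t).2.1) + B (ν (ϕ t).1 (ϕ t).2.1)
    have hlt : (ϕ t).2.1 < k (ϕ t).1 := (hinv t).1
    have hltN : (ϕ t).2.1 < N := lt_of_lt_of_le hlt (hkN _)
    have hd : w (ϕ t).1 ((ϕ t).2.1 + 1)
        = A (w (ϕ t).1 (ϕ t).2.1) + B (ν (ϕ t).1 (ϕ t).2.1) := hwdyn _ _ hltN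
    by_cases hres : (ϕ t).2.1 + 1 = k (ϕ t).1
    · rw [hϕsucc, hstep_def]
      simp only [if_pos hres]
      rw [hw0]
      exact hd
    · rw [hϕsucc, hstep_def]
      simp only [if_neg hres]
      exact hd
  · intro t
    show ‖w (ϕ t).1 (ϕ t).2.1‖ ≤ E ^ p⁻¹ * (lam0 ^ p⁻¹) ^ t * ‖xbar‖
    obtain ⟨hlt, hVz, hts⟩ := hinv t
    set z := (ϕ t).1
    set kp := (ϕ t).2.1
    set m := (ϕ t).2.2
    have hltN : kp < N := lt_of_lt_of_le hlt (hkN _)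
    have hge0 : (0:ℝ) ≤ (1 - α) ^ m * V xbar := mul_nonneg (by positivity) (hV0 _)
    -- V bound at current state
    have hVcur : V (w z kp) ≤ K * ((1 - α) ^ m * V xbar) := by
      rcases Nat.eq_zero_or_pos kp with h0 | h1
      · rw [h0, hw0]
        calc V z ≤ (1 - α) ^ m * V xbar := hVz
          _ = 1 * ((1 - α) ^ m * V xbar) := by ring
          _ ≤ K * ((1 - α) ^ m * V xbar) := mul_le_mul_of_nonneg_right hK1 hge0
      · calc V (w z kp) ≤ Kσ * V z := hbnd z kp h1 (le_of_lt hltN)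
          _ ≤ Kσ * ((1 - α) ^ m * V xbar) := mul_le_mul_of_nonneg_left hVz hKσ0
          _ ≤ K * ((1 - α) ^ m * V xbar) :=
              mul_le_mul_of_nonneg_right (le_max_right _ _) hge0
    -- decay
    have htm : t ≤ (m + 1) * N := by
      have : kp + 1 ≤ N := hltN
      calc t ≤ m * N + kp := hts
        _ ≤ m * N + N := by omega
        _ = (m + 1) * N := by ring
    have hdecay : (1 - α) ^ (m + 1) ≤ lam0 ^ t := by
      calc (1 - α) ^ (m + 1) = (lam0 ^ N) ^ (m + 1) := by rw [hlamN]
        _ = lam0 ^ ((m + 1) * N) := by rw [← pow_mul, mul_comm]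
        _ ≤ lam0 ^ t := pow_le_pow_of_le_one hlam0pos.le hlam0lt1.le htm
    have hdecay' : (1 - α) ^ m ≤ lam0 ^ t / (1 - α) := by
      rw [le_div_iff₀ h1α]
      calc (1 - α) ^ m * (1 - α) = (1 - α) ^ (m + 1) := by ring
        _ ≤ lam0 ^ t := hdecay
    -- assemble norm bound
    have hchain : c * ‖w z kp‖ ^ p ≤ K * ((lam0 ^ t / (1 - α)) * (C * ‖xbar‖ ^ p)) := by
      calc c * ‖w z kp‖ ^ p ≤ V (w z kp) := hlow _
        _ ≤ K * ((1 - α) ^ m * V xbar) := hVcur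
        _ ≤ K * ((lam0 ^ t / (1 - α)) * (C * ‖xbar‖ ^ p)) := by
            refine mul_le_mul_of_nonneg_left ?_ hK0.le
            refine mul_le_mul hdecay' (hup xbar) (hV0 _) ?_
            positivity
    have hfin : ‖w z kp‖ ^ p ≤ E * (lam0 ^ t * ‖xbar‖ ^ p) := by
      have h1 : c * (‖w z kp‖ ^ p) ≤ c * (E * (lam0 ^ t * ‖xbar‖ ^ p)) := by
        calc c * (‖w z kp‖ ^ p) ≤ K * ((lam0 ^ t / (1 - α)) * (C * ‖xbar‖ ^ p)) := hchain
          _ = c * (E * (lam0 ^ t * ‖xbar‖ ^ p)) := by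
              rw [hE_def]; field_simp
      exact le_of_mul_le_mul_left h1 hc
    -- take p-th roots
    have hrhs0 : (0:ℝ) ≤ E ^ p⁻¹ * (lam0 ^ p⁻¹) ^ t * ‖xbar‖ := by positivity
    rw [← Real.rpow_le_rpow_iff (norm_nonneg _) hrhs0 hp]
    have hpow : (E ^ p⁻¹ * (lam0 ^ p⁻¹) ^ t * ‖xbar‖) ^ p
        = E * (lam0 ^ t * ‖xbar‖ ^ p) := by
      rw [Real.mul_rpow (by positivity) (norm_nonneg _),
          Real.mul_rpow (by positivity) (by positivity),
          Real.rpow_inv_rpow hE.le (ne_of_gt hp)]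
      have h2 : ((lam0 ^ p⁻¹) ^ t) ^ p = lam0 ^ t := by
        rw [← Real.rpow_natCast (lam0 ^ p⁻¹) t, ← Real.rpow_mul (by positivity),
            mul_comm (t:ℝ) p, Real.rpow_mul (by positivity),
            Real.rpow_inv_rpow hlam0pos.le (ne_of_gt hp), Real.rpow_natCast]
      rw [h2]; ring
    rw [hpow]
    exact hfin
end
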